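/- The game c is a coset weighted potential game with respect to w if and only if there exist functions d_i : S_{-i} → ℝ (i = 1,…,n) such that for every strategy profile s ∈ S and every i ∈ {2,…,n}: w_1(s_{-1}) d_i(s_{-i}) − w_i(s_{-i}) d_1(s_{-1}) = w_1(s_{-1}) c_i(s) − w_i(s_{-i}) c_1(s). -/

import Mathlib

/-- `f : S → ℝ` depends only on the strategies of the players other than `i`
(i.e. it is a function of `s_{-i}`). -/
def IndepOf {n : ℕ} {k : Fin n → ℕ} (i : Fin n) (f : (∀ j, Fin (k j)) → ℝ) : Prop :=
  ∀ (s : ∀ j, Fin (k j)) (x : Fin (k i)), f (Function.update s i x) = f s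

/-- `P` is a coset weighted potential function for the game `c` with respect to the
coset-depending weights `w`:
`c_i(x,s_{-i}) − c_i(y,s_{-i}) = w_i(s_{-i}) (P(x,s_{-i}) − P(y,s_{-i}))`. -/
def IsCWPotentialFn {n : ℕ} {k : Fin n → ℕ} (c w : Fin n → (∀ j, Fin (k j)) → ℝ)
    (P : (∀ j, Fin (k j)) → ℝ) : Prop :=
  ∀ (i : Fin n) (s : ∀ j, Fin (k j)) (x y : Fin (k i)),
    c i (Function.update s i x) - c i (Function.update s i y)
      = w i s * (P (Function.update s i x) - P (Function.update s i y))

/-!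
Both sides say that `c i = d i + w i * P` for functions `d i` of `s_{-i}`. Given a potential
`P`, the differences `d i := c i - w i * P` do not depend on `s_i`. Conversely, the equation for
player `i` against player `1` says exactly that `c i - d i = w i * P` with
`P := (c 1 - d 1) / w 1`, and such a `P` is a potential because `w i` and `d i` are constant
along player `i`'s deviations.
-/

section

variable {n : ℕ} {k : Fin n → ℕ} {c w : Fin n → (∀ j, Fin (k j)) → ℝ} {P : (∀ j, Fin (k j)) → ℝ}

theorem isCWPotentialFn_iff_indepOf (hwI : ∀ i, IndepOf i (w i)) :
    IsCWPotentialFn c w P ↔ ∀ i, IndepOf i (fun s => c i s - w i s * P s) := by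
  constructor
  · intro hP i s x
    have h := hP i s x (s i)
    rw [Function.update_eq_self] at h
    dsimp only
    rw [hwI i s x]
    linear_combination h
  · intro hd i s x y
    have hx := hd i s x
    have hy := hd i s y
    dsimp only at hx hy
    rw [hwI i s x] at hx
    rw [hwI i s y] at hy
    linear_combination hx - hy

end

theorem sub_mul_div_eq_of_mul_sub_mul_eq {a b c d e f : ℝ} (ha : a ≠ 0)
    (h : a * d - b * e = a * c - b * f) : c - b * ((f - e) / a) = d := by
  field_simp
  linear_combination -h

theorem cwpg_iff_potential_equation (n : ℕ) (hn : 2 ≤ n) (k : Fin n → ℕ)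
    (c w : Fin n → (∀ j, Fin (k j)) → ℝ)
    (hw : ∀ i s, 0 < w i s) (hwI : ∀ i, IndepOf i (w i)) :
    (∃ P, IsCWPotentialFn c w P) ↔
      ∃ d : Fin n → (∀ j, Fin (k j)) → ℝ, (∀ i, IndepOf i (d i)) ∧
        ∀ (s : ∀ j, Fin (k j)) (i : Fin n), i ≠ ⟨0, by omega⟩ →
          w ⟨0, by omega⟩ s * d i s - w i s * d ⟨0, by omega⟩ s
            = w ⟨0, by omega⟩ s * c i s - w i s * c ⟨0, by omega⟩ s := by
  simp only [isCWPotentialFn_iff_indepOf hwI]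
  set z : Fin n := ⟨0, by omega⟩
  constructor
  · rintro ⟨P, hP⟩
    exact ⟨fun i s => c i s - w i s * P s, hP, fun s i _ => by ring⟩
  · rintro ⟨d, hdI, hd⟩
    have hd_all : ∀ s i, w z s * d i s - w i s * d z s = w z s * c i s - w i s * c z s := by
      intro s i
      by_cases hi : i = z
      · rw [hi]; ring
      · exact hd s i hi
    refine ⟨fun s => (c z s - d z s) / w z s, fun i => ?_⟩
    have hcd : (fun s => c i s - w i s * ((c z s - d z s) / w z s)) = d i :=
      funext fun s => sub_mul_div_eq_of_mul_sub_mul_eq (hw z s).ne' (hd_all s i)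
    rw [hcd]
    exact hdI i
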